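/- Let 𝒜 = ((A,[·,·]_A),(V,ρ),T) be a relative Rota-Baxter Lie algebra and ℬ = (M →^S B, ρ_B, ρ_M, μ) a representation of 𝒜 on the 2-term complex M →^S B. Then the semidirect product structure: bracket [x+a, y+b]_⋉ = [x,y]_A + ρ_B(x)b − ρ_B(y)a on A⊕B, representation ρ_⋉(x+a)(v+m) = ρ(x)v + ρ_M(x)m − μ(v)a on V⊕M, and operator T_⋉(v+m) = T(v) + S(m), defines a relative Rota-Baxter Lie algebra ((A⊕B,[·,·]_⋉),(V⊕M,ρ_⋉),T_⋉). -/
import Mathlib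


universe u

section
variable (K : Type u) [Field K]

/-- A relative Rota-Baxter Lie algebra: a Lie algebra `A`, a representation `rep` of `A`
on `V`, and a relative Rota-Baxter operator `T : V → A`. -/
structure RelRB (A V : Type u) [AddCommGroup A] [Module K A]
    [AddCommGroup V] [Module K V] : Type u where
  br : A →ₗ[K] A →ₗ[K] A
  skew : ∀ x y, br x y + br y x = 0
  jacobi : ∀ x y z, br x (br y z) = br (br x y) z + br y (br x z)
  rep : A →ₗ[K] Module.End K V
  rep_br : ∀ x y, rep (br x y) = rep x * rep y - rep y * rep x
  T : V →ₗ[K] A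
  rb : ∀ u v, br (T u) (T v) = T (rep (T u) v - rep (T v) u)

variable {A V B M : Type u}
  [AddCommGroup A] [Module K A] [AddCommGroup V] [Module K V]
  [AddCommGroup B] [Module K B] [AddCommGroup M] [Module K M]

/-- A representation of a relative Rota-Baxter Lie algebra `𝒜` on a 2-term complex
`M →^S B`. -/
structure RepRB (𝒜 : RelRB K A V) (B M : Type u) [AddCommGroup B] [Module K B]
    [AddCommGroup M] [Module K M] : Type u where
  S : M →ₗ[K] B
  ρB : A →ₗ[K] Module.End K B
  ρB_br : ∀ x y, ρB (𝒜.br x y) = ρB x * ρB y - ρB y * ρB x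
  ρM : A →ₗ[K] Module.End K M
  ρM_br : ∀ x y, ρM (𝒜.br x y) = ρM x * ρM y - ρM y * ρM x
  μ : V →ₗ[K] B →ₗ[K] M
  re1 : ∀ x v, μ (𝒜.rep x v) = ρM x ∘ₗ μ v - μ v ∘ₗ ρB x
  re2 : ∀ v, ρB (𝒜.T v) ∘ₗ S = S ∘ₗ ρM (𝒜.T v) + S ∘ₗ (μ v ∘ₗ S)
/-- the semidirect product of a relative Rota-Baxter Lie algebra `𝒜` and a
representation `ℬ = (M →^S B, ρ_B, ρ_M, μ)` is a relative Rota-Baxter Lie algebra. -/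
theorem semidirect_product_is_relRB (𝒜 : RelRB K A V) (R : RepRB K 𝒜 B M) :
    let br' : A × B → A × B → A × B := fun p q =>
      (𝒜.br p.1 q.1, R.ρB p.1 q.2 - R.ρB q.1 p.2)
    let rep' : A × B → V × M → V × M := fun p u =>
      (𝒜.rep p.1 u.1, R.ρM p.1 u.2 - R.μ u.1 p.2)
    let T' : V × M → A × B := fun u => (𝒜.T u.1, R.S u.2)
    (∀ p q, br' p q + br' q p = 0) ∧
    (∀ p q r, br' p (br' q r) = br' (br' p q) r + br' q (br' p r)) ∧
    (∀ p q u, rep' (br' p q) u = rep' p (rep' q u) - rep' q (rep' p u)) ∧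
    (∀ u w, br' (T' u) (T' w) = T' (rep' (T' u) w - rep' (T' w) u)) := by
  intro br' rep' T'
  have hB : ∀ x y (b : B), R.ρB (𝒜.br x y) b
      = R.ρB x (R.ρB y b) - R.ρB y (R.ρB x b) := fun x y b => by
    rw [R.ρB_br]; rfl
  have hM : ∀ x y (m : M), R.ρM (𝒜.br x y) m
      = R.ρM x (R.ρM y m) - R.ρM y (R.ρM x m) := fun x y m => by
    rw [R.ρM_br]; rfl
  have hr : ∀ x y (v : V), 𝒜.rep (𝒜.br x y) v
      = 𝒜.rep x (𝒜.rep y v) - 𝒜.rep y (𝒜.rep x v) := fun x y v => by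
    rw [𝒜.rep_br]; rfl
  have h1 : ∀ (x : A) (v : V) (b : B), R.μ (𝒜.rep x v) b
      = R.ρM x (R.μ v b) - R.μ v (R.ρB x b) := fun x v b => by
    rw [R.re1]; rfl
  have h2 : ∀ (v : V) (m : M), R.ρB (𝒜.T v) (R.S m)
      = R.S (R.ρM (𝒜.T v) m) + R.S (R.μ v (R.S m)) := fun v m => by
    have := congrArg (fun f => f m) (R.re2 v); simpa using this
  refine ⟨?_, ?_, ?_, ?_⟩
  · intro p q
    have := 𝒜.skew p.1 q.1
    simp [br', Prod.ext_iff, this]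
  · intro p q r
    simp only [br', Prod.mk_add_mk, Prod.mk.injEq]
    refine ⟨𝒜.jacobi _ _ _, ?_⟩
    simp only [map_sub, LinearMap.sub_apply, hB]
    abel
  · intro p q u
    simp only [rep', br', Prod.mk_sub_mk, Prod.mk.injEq]
    refine ⟨hr _ _ _, ?_⟩
    simp only [map_sub, LinearMap.sub_apply, hM, h1, hr]
    abel
  · intro u w
    simp only [br', rep', T', Prod.mk.injEq, Prod.fst_sub, Prod.snd_sub, map_sub]
    refine ⟨(𝒜.rb _ _).trans (map_sub _ _ _), ?_⟩
    rw [h2, h2]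
    abel

end
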